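/- Let n, N be positive integers and y_1, …, y_N ∈ ℝⁿ. Fix an index j such that y_i ≠ y_j for all i ≠ j, and fix ε ∈ ℝⁿ. For s, σ > 0 let ε*_{s,σ}(x) = (1/(sσ)) · ( x − s · (Σ_i N(x; s y_i, s²σ²I) y_i)/(Σ_i N(x; s y_i, s²σ²I)) ) be the optimal denoiser. Then for every choice of s = s(σ) > 0, ε*_{s,σ}( s (y_j + σ ε) ) → ε as σ → 0⁺. -/

import Mathlib

/-!
Undoing the scaling by `s`, the denoiser at `s (y j + σ ε)` equals `ε + σ⁻¹ (y j - m)`, where `m`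
is the mean of the data points under the posterior weights `exp (-‖y j + σ ε - y i‖² / (2σ²))`.
The weight of `y j` is the constant `exp (-‖ε‖² / 2)`, while the weight of every other data point
is `O(exp (-c / σ²))` for some `c > 0`, which beats the factor `σ⁻¹`.
-/

open MeasureTheory Real Finset Filter Topology

/-- Isotropic Gaussian density `N(x; μ, τ²I)` on `ℝⁿ`. -/
noncomputable def gaussDensity (n : ℕ) (μ : EuclideanSpace ℝ (Fin n)) (τ : ℝ)
    (x : EuclideanSpace ℝ (Fin n)) : ℝ :=
  (2 * Real.pi * τ ^ 2) ^ (-(n : ℝ) / 2) * Real.exp (-‖x - μ‖ ^ 2 / (2 * τ ^ 2))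

/-- The optimal denoiser
`ε*_{s,σ}(x) = (1/(sσ)) (x − s (Σᵢ N(x; s yᵢ, s²σ²I) yᵢ) / (Σᵢ N(x; s yᵢ, s²σ²I)))`. -/
noncomputable def optDenoiser (n N : ℕ) (y : Fin N → EuclideanSpace ℝ (Fin n)) (s σ : ℝ)
    (x : EuclideanSpace ℝ (Fin n)) : EuclideanSpace ℝ (Fin n) :=
  (1 / (s * σ)) •
    (x - s • ((∑ i, gaussDensity n (s • y i) (s * σ) x)⁻¹ •
      ∑ i, gaussDensity n (s • y i) (s * σ) x • y i))

lemma tendsto_exp_neg_div_sq_div_self {a : ℝ} (ha : 0 < a) :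
    Tendsto (fun σ : ℝ => exp (-a / σ ^ 2) / σ) (𝓝[>] 0) (𝓝 0) := by
  have hu : Tendsto (fun σ : ℝ => a * σ⁻¹ ^ 2) (𝓝[>] 0) atTop :=
    ((tendsto_pow_atTop two_ne_zero).comp tendsto_inv_nhdsGT_zero).const_mul_atTop ha
  have hlin : Tendsto (fun σ : ℝ => σ / a) (𝓝[>] 0) (𝓝 0) := by
    simpa using ((continuous_id.div_const a).tendsto 0).mono_left nhdsWithin_le_nhds
  -- `exp (-a / σ²) / σ = (σ / a) * (u * exp (-u))` with `u = a / σ² → ∞`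
  have := hlin.mul ((tendsto_pow_mul_exp_neg_atTop_nhds_zero 1).comp hu)
  rw [zero_mul] at this
  refine this.congr' ?_
  filter_upwards [self_mem_nhdsWithin] with σ (hσ : 0 < σ)
  simp only [Function.comp_apply, pow_one]
  field_simp

section GaussKernel

variable {E : Type*} [NormedAddCommGroup E]

noncomputable def gaussKernel (μ : E) (τ : ℝ) (x : E) : ℝ :=
  exp (-‖x - μ‖ ^ 2 / (2 * τ ^ 2))

lemma gaussKernel_pos (μ : E) (τ : ℝ) (x : E) : 0 < gaussKernel μ τ x :=
  exp_pos _

variable [NormedSpace ℝ E]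

lemma gaussKernel_smul_smul {t : ℝ} (ht : t ≠ 0) (μ : E) (τ : ℝ) (x : E) :
    gaussKernel (t • μ) (t * τ) (t • x) = gaussKernel μ τ x := by
  rw [gaussKernel, gaussKernel, ← smul_sub, norm_smul, mul_pow, mul_pow, Real.norm_eq_abs,
    sq_abs, show 2 * (t ^ 2 * τ ^ 2) = t ^ 2 * (2 * τ ^ 2) by ring, ← mul_neg,
    mul_div_mul_left _ _ (pow_ne_zero 2 ht)]

lemma gaussKernel_add_smul_self {τ : ℝ} (hτ : τ ≠ 0) (μ ε : E) :
    gaussKernel μ τ (μ + τ • ε) = exp (-‖ε‖ ^ 2 / 2) := by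
  rw [gaussKernel, add_sub_cancel_left, norm_smul, mul_pow, Real.norm_eq_abs, sq_abs]
  field_simp

lemma tendsto_gaussKernel_add_smul_div_self {μ x : E} (hx : x ≠ μ) (ε : E) :
    Tendsto (fun σ : ℝ => gaussKernel μ σ (x + σ • ε) / σ) (𝓝[>] 0) (𝓝 0) := by
  have hd : 0 < ‖x - μ‖ ^ 2 := by
    have := norm_pos_iff.mpr (sub_ne_zero.mpr hx)
    positivity
  have hcont : Tendsto (fun σ : ℝ => ‖x + σ • ε - μ‖ ^ 2) (𝓝 0) (𝓝 (‖x - μ‖ ^ 2)) := by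
    have : Continuous fun σ : ℝ => ‖x + σ • ε - μ‖ ^ 2 := by fun_prop
    simpa using this.tendsto 0
  have hfar : ∀ᶠ σ : ℝ in 𝓝 0, ‖x - μ‖ ^ 2 / 2 ≤ ‖x + σ • ε - μ‖ ^ 2 :=
    hcont.eventually (eventually_ge_nhds (half_lt_self hd))
  refine squeeze_zero' ?_ ?_
    (tendsto_exp_neg_div_sq_div_self (a := ‖x - μ‖ ^ 2 / 4) (by positivity))
  · filter_upwards [self_mem_nhdsWithin] with σ (hσ : 0 < σ)
    exact div_nonneg (gaussKernel_pos _ _ _).le hσ.le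
  · filter_upwards [self_mem_nhdsWithin, nhdsWithin_le_nhds hfar] with σ (hσ : 0 < σ) hσfar
    rw [gaussKernel, show -(‖x - μ‖ ^ 2 / 4) / σ ^ 2 = -(‖x - μ‖ ^ 2 / 2) / (2 * σ ^ 2) by ring]
    gcongr

end GaussKernel

lemma Finset.centerMass_const_sub {ι F : Type*} [AddCommGroup F] [Module ℝ F] (t : Finset ι)
    {w : ι → ℝ} (hw : ∑ i ∈ t, w i ≠ 0) (c : F) (z : ι → F) :
    t.centerMass w (fun i => c - z i) = c - t.centerMass w z := by
  simp only [centerMass, smul_sub, sum_sub_distrib, ← sum_smul, smul_smul, inv_mul_cancel₀ hw,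
    one_smul]

lemma tendsto_centerMass_nhds_zero {α ι E : Type*} [NormedAddCommGroup E] [NormedSpace ℝ E]
    {l : Filter α} {t : Finset ι} {w : α → ι → ℝ} {z : α → ι → E} {c : ℝ} (hc : 0 < c)
    (hw : ∀ᶠ a in l, c ≤ ∑ i ∈ t, w a i)
    (hz : ∀ i ∈ t, Tendsto (fun a => w a i • z a i) l (𝓝 0)) :
    Tendsto (fun a => t.centerMass (w a) (z a)) l (𝓝 0) := by
  have hsum : Tendsto (fun a => ∑ i ∈ t, w a i • z a i) l (𝓝 0) := by
    simpa using tendsto_finsetSum t hz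
  refine IsBoundedUnder.smul_tendsto_zero (isBoundedUnder_of_eventually_le (a := c⁻¹) ?_) hsum
  filter_upwards [hw] with a ha
  rw [Function.comp_apply, norm_inv, Real.norm_of_nonneg (hc.le.trans ha)]
  exact inv_anti₀ hc ha

lemma optDenoiser_smul_add_smul {n N : ℕ} [NeZero N] (y : Fin N → EuclideanSpace ℝ (Fin n))
    (x ε : EuclideanSpace ℝ (Fin n)) {s σ : ℝ} (hs : s ≠ 0) (hσ : σ ≠ 0) :
    optDenoiser n N y s σ (s • (x + σ • ε)) =
      ε + univ.centerMass (fun i => gaussKernel (y i) σ (x + σ • ε))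
        (fun i => σ⁻¹ • (x - y i)) := by
  set C : ℝ := (2 * π * (s * σ) ^ 2) ^ (-(n : ℝ) / 2)
  have hC : C ≠ 0 := by positivity
  have hdensity : (fun i => gaussDensity n (s • y i) (s * σ) (s • (x + σ • ε))) =
      C • fun i => gaussKernel (y i) σ (x + σ • ε) := by
    ext i
    rw [Pi.smul_apply, smul_eq_mul, ← gaussKernel_smul_smul hs]
    rfl
  have hmass : ∑ i, gaussKernel (y i) σ (x + σ • ε) ≠ 0 :=
    (sum_pos (fun i _ => gaussKernel_pos _ _ _) univ_nonempty).ne'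
  change (1 / (s * σ)) • (s • (x + σ • ε) - s • univ.centerMass _ y) = _
  rw [hdensity, centerMass_smul_left univ y hC, centerMass_smul, centerMass_const_sub _ hmass]
  match_scalars <;> field_simp

theorem optDenoiser_tendsto_noise_low_noise_general (n N : ℕ)
    (y : Fin N → EuclideanSpace ℝ (Fin n)) (j : Fin N) (hj : ∀ i, i ≠ j → y i ≠ y j)
    (ε : EuclideanSpace ℝ (Fin n)) (s : ℝ → ℝ) (hs : ∀ σ, 0 < s σ) :
    Tendsto (fun σ : ℝ => optDenoiser n N y (s σ) σ ((s σ) • (y j + σ • ε)))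
      (𝓝[>] 0) (𝓝 ε) := by
  have : NeZero N := NeZero.of_pos j.pos
  set w : ℝ → Fin N → ℝ := fun σ i => gaussKernel (y i) σ (y j + σ • ε)
  have hmass : ∀ᶠ σ in 𝓝[>] 0, exp (-‖ε‖ ^ 2 / 2) ≤ ∑ i, w σ i := by
    filter_upwards [self_mem_nhdsWithin] with σ (hσ : 0 < σ)
    calc exp (-‖ε‖ ^ 2 / 2) = w σ j := (gaussKernel_add_smul_self hσ.ne' _ _).symm
      _ ≤ ∑ i, w σ i := single_le_sum (fun i _ => (gaussKernel_pos _ _ _).le) (mem_univ j)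
  have hdecay : ∀ i ∈ univ, Tendsto (fun σ => w σ i • σ⁻¹ • (y j - y i)) (𝓝[>] 0) (𝓝 0) := by
    intro i _
    rcases eq_or_ne i j with rfl | hi
    · simp
    · simpa [w, smul_smul, div_eq_mul_inv] using
        (tendsto_gaussKernel_add_smul_div_self (hj i hi).symm ε).smul_const (y j - y i)
  have hlim := (tendsto_centerMass_nhds_zero (exp_pos _) hmass hdecay).const_add ε
  rw [add_zero] at hlim
  refine hlim.congr' ?_
  filter_upwards [self_mem_nhdsWithin] with σ (hσ : 0 < σ)
  exact (optDenoiser_smul_add_smul y (y j) ε (hs σ).ne' hσ.ne').symm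

/-- Low-noise limit: on the forward-perturbed data point `x_t = s(y j + σ ε)`, where `y j`
is not duplicated in the dataset, the optimal denoiser converges to `ε` as `σ → 0⁺`, for any
choice of scaling `s = s(σ) > 0`. -/
theorem optDenoiser_tendsto_noise_low_noise (n N : ℕ) (hn : 0 < n) (hN : 0 < N)
    (y : Fin N → EuclideanSpace ℝ (Fin n)) (j : Fin N) (hj : ∀ i, i ≠ j → y i ≠ y j)
    (ε : EuclideanSpace ℝ (Fin n)) (s : ℝ → ℝ) (hs : ∀ σ, 0 < s σ) :
    Tendsto (fun σ : ℝ => optDenoiser n N y (s σ) σ ((s σ) • (y j + σ • ε)))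
      (𝓝[>] 0) (𝓝 ε) :=
  optDenoiser_tendsto_noise_low_noise_general n N y j hj ε s hs
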